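/- Fix n ≥ 3 and 1 ≤ i ≤ n-1. The map deleting the second letter n of π is a bijection from the set of permutations of [n] avoiding {1243, 1324} with π_1 = i and π_2 = n, onto the set of permutations of [n-1] avoiding {1243, 1324} with first letter i. Moreover, if π maps to π', then desc(π) = desc(π') when π'_2 < i, and desc(π) = desc(π') + 1 when π'_2 > i. -/

import Mathlib

/-!
Write `π = i n π₃ ⋯ πₙ`. Every letter of `1243` and `1324` in the first two positions lies below
some later letter of the pattern, so the maximum `n`, sitting in second position, cannot take part
in an occurrence: deleting `n` preserves and reflects avoidance, and reinserting `n` in second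
position inverts it. On descents, the ascent `i n` and the descent `n π₃` of `π` replace the pair
`i π₃` of `π'`, which is a descent exactly when `π₃ < i`.
-/

/-- The word `w` contains the pattern `p`: some subsequence of `w` is
order-isomorphic to `p`. -/
def ContainsPat (w p : List ℕ) : Prop :=
  ∃ s : List ℕ, s.Sublist w ∧ s.length = p.length ∧
    ∀ i j : ℕ, i < p.length → j < p.length → (s[i]! < s[j]! ↔ p[i]! < p[j]!)

/-- The word `w` avoids the pattern `p`. -/
def AvoidsPat (w p : List ℕ) : Prop := ¬ ContainsPat w p

/-- `π` is the one-line notation of a permutation of `{1,…,n}`. -/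
def IsPermList (n : ℕ) (π : List ℕ) : Prop :=
  π.Perm ((List.range n).map (· + 1))

/-- The number of descents of a word. -/
def descList (π : List ℕ) : ℕ :=
  ((List.range (π.length - 1)).filter (fun t => decide (π[t + 1]! < π[t]!))).length

theorem ContainsPat.of_sublist {s w p : List ℕ} (h : ContainsPat s p) (hs : s.Sublist w) :
    ContainsPat w p :=
  let ⟨u, hu, hl, hiso⟩ := h
  ⟨u, hu.trans hs, hl, hiso⟩

theorem AvoidsPat.of_sublist {s w p : List ℕ} (h : AvoidsPat w p) (hs : s.Sublist w) :
    AvoidsPat s p := fun hc => h (hc.of_sublist hs)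

theorem avoidsPat_cons_max_cons_iff {p : List ℕ} {m : ℕ} (hm : m < p.length)
    (h0 : p[0]! < p[m]!) (h1 : p[1]! < p[m]!) {a M : ℕ} {t : List ℕ}
    (hle : ∀ x ∈ a :: t, x ≤ M) :
    AvoidsPat (a :: M :: t) p ↔ AvoidsPat (a :: t) p := by
  refine ⟨fun h => h.of_sublist ((List.sublist_cons_self M t).cons_cons a), ?_⟩
  rintro hav ⟨s, hs, hl, hiso⟩
  have not_max_at : ∀ k < p.length, s[k]! = M → p[k]! < p[m]! → False := by
    intro k hk hkM hpk
    have hsm : s[m]! ∈ a :: M :: t := by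
      rw [getElem!_pos s m (by omega)]
      exact hs.subset (List.getElem_mem _)
    have hsm_le : s[m]! ≤ M := by
      rcases List.mem_cons.mp hsm with h | h
      · exact h ▸ hle a List.mem_cons_self
      rcases List.mem_cons.mp h with h | h
      · exact h.le
      · exact hle _ (List.mem_cons_of_mem a h)
    have := (hiso k m hk hm).mpr hpk
    omega
  cases hs with
  | cons _ hs =>
    cases hs with
    | cons _ hs => exact hav ⟨s, hs.trans (List.sublist_cons_self a t), hl, hiso⟩
    | cons_cons _ _ => exact not_max_at 0 (by omega) (List.getElem!_cons_zero ..) h0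
  | @cons_cons u _ _ hs =>
    cases hs with
    | cons _ hs => exact hav ⟨a :: u, hs.cons_cons a, hl, hiso⟩
    | cons_cons _ _ => exact not_max_at 1 (by simp at hl; omega) (by simp) h1

theorem IsPermList.length_eq {n : ℕ} {π : List ℕ} (h : IsPermList n π) : π.length = n := by
  simpa using List.Perm.length_eq h

theorem IsPermList.le_of_mem {n x : ℕ} {π : List ℕ} (h : IsPermList n π) (hx : x ∈ π) :
    x ≤ n := by
  obtain ⟨y, hy, rfl⟩ := List.mem_map.mp (h.subset hx)
  simp only [List.mem_range] at hy
  omega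

theorem isPermList_cons_succ_cons_iff {k a : ℕ} {t : List ℕ} :
    IsPermList (k + 1) (a :: (k + 1) :: t) ↔ IsPermList k (a :: t) := by
  have hrange : (List.range (k + 1)).map (· + 1) = (List.range k).map (· + 1) ++ [k + 1] := by
    rw [List.range_succ, List.map_append]; rfl
  have hswap : (a :: (k + 1) :: t).Perm ((k + 1) :: a :: t) := List.Perm.swap (k + 1) a t
  have hlast : ((List.range k).map (· + 1) ++ [k + 1]).Perm
      ((k + 1) :: (List.range k).map (· + 1)) :=
    List.perm_append_singleton _ _
  unfold IsPermList
  rw [hrange]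
  constructor
  · intro h
    exact (List.perm_cons _).mp ((hswap.symm.trans h).trans hlast)
  · intro h
    exact hswap.trans (((List.perm_cons _).mpr h).trans hlast.symm)

theorem avoidsPat_1243_cons_succ_cons_iff {k a : ℕ} {t : List ℕ} (h : IsPermList k (a :: t)) :
    AvoidsPat (a :: (k + 1) :: t) [1,2,4,3] ↔ AvoidsPat (a :: t) [1,2,4,3] :=
  avoidsPat_cons_max_cons_iff (m := 2) (by simp) (by simp) (by simp)
    fun _ hx => (h.le_of_mem hx).trans k.le_succ

theorem avoidsPat_1324_cons_succ_cons_iff {k a : ℕ} {t : List ℕ} (h : IsPermList k (a :: t)) :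
    AvoidsPat (a :: (k + 1) :: t) [1,3,2,4] ↔ AvoidsPat (a :: t) [1,3,2,4] :=
  avoidsPat_cons_max_cons_iff (m := 3) (by simp) (by simp) (by simp)
    fun _ hx => (h.le_of_mem hx).trans k.le_succ

theorem descList_cons_cons (a b : ℕ) (l : List ℕ) :
    descList (a :: b :: l) = (if b < a then 1 else 0) + descList (b :: l) := by
  unfold descList
  rw [show (a :: b :: l).length - 1 = l.length + 1 by simp,
    show (b :: l).length - 1 = l.length by simp, List.range_succ_eq_map, List.filter_cons,
    List.filter_map]
  simp only [List.getElem!_cons_zero, List.getElem!_cons_succ, Function.comp_def]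
  by_cases h : b < a <;> simp [h, add_comm]

theorem descList_cons_max_cons_of_lt {a M c : ℕ} {r : List ℕ} (ha : a < M) (hM : c < M)
    (hc : c < a) : descList (a :: M :: c :: r) = descList (a :: c :: r) := by
  rw [descList_cons_cons, descList_cons_cons, descList_cons_cons a, if_neg (by omega), if_pos hM,
    if_pos hc, zero_add, add_comm]

theorem descList_cons_max_cons_of_gt {a M c : ℕ} {r : List ℕ} (ha : a < M) (hM : c < M)
    (hc : a < c) : descList (a :: M :: c :: r) = descList (a :: c :: r) + 1 := by
  rw [descList_cons_cons, descList_cons_cons, descList_cons_cons a, if_neg (by omega), if_pos hM,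
    if_neg (by omega), zero_add, zero_add, add_comm]

theorem IsPermList.exists_eq_cons_cons_cons {n a b : ℕ} {π : List ℕ} (hπ : IsPermList n π)
    (hn : 3 ≤ n) (h0 : π[0]! = a) (h1 : π[1]! = b) : ∃ c r, π = a :: b :: c :: r := by
  match π, hπ.length_eq ▸ hn with
  | _ :: _ :: c :: r, _ =>
    simp only [List.getElem!_cons_zero, List.getElem!_cons_succ] at h0 h1
    exact ⟨c, r, by rw [h0, h1]⟩

theorem stmt14_general (n i : ℕ) (hn : 3 ≤ n) :
    Set.BijOn (fun π : List ℕ => π.eraseIdx 1)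
      {π : List ℕ | IsPermList n π ∧ AvoidsPat π [1,2,4,3] ∧ AvoidsPat π [1,3,2,4] ∧
        π[0]! = i ∧ π[1]! = n}
      {σ : List ℕ | IsPermList (n - 1) σ ∧ AvoidsPat σ [1,2,4,3] ∧
        AvoidsPat σ [1,3,2,4] ∧ σ[0]! = i} ∧
    ∀ π ∈ {π : List ℕ | IsPermList n π ∧ AvoidsPat π [1,2,4,3] ∧ AvoidsPat π [1,3,2,4] ∧
        π[0]! = i ∧ π[1]! = n},
      ((π.eraseIdx 1)[1]! < i → descList π = descList (π.eraseIdx 1)) ∧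
      (i < (π.eraseIdx 1)[1]! → descList π = descList (π.eraseIdx 1) + 1) := by
  obtain ⟨k, rfl⟩ : ∃ k, n = k + 1 := ⟨n - 1, by omega⟩
  simp only [Nat.add_sub_cancel]
  refine ⟨Set.InvOn.bijOn (f' := fun σ => σ.insertIdx 1 (k + 1)) ⟨?_, ?_⟩ ?_ ?_, ?_⟩
  · rintro π ⟨hπ, -, -, h0, h1⟩
    obtain ⟨c, r, rfl⟩ := hπ.exists_eq_cons_cons_cons hn h0 h1
    rfl
  · rintro (_ | ⟨a, t⟩) - <;> rfl
  · rintro π ⟨hπ, h1243, h1324, h0, h1⟩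
    obtain ⟨c, r, rfl⟩ := hπ.exists_eq_cons_cons_cons hn h0 h1
    have hσ := isPermList_cons_succ_cons_iff.mp hπ
    exact ⟨hσ, (avoidsPat_1243_cons_succ_cons_iff hσ).mp h1243,
      (avoidsPat_1324_cons_succ_cons_iff hσ).mp h1324, rfl⟩
  · rintro (_ | ⟨a, t⟩) ⟨hσ, h1243, h1324, h0⟩
    · exact absurd hσ.length_eq (by simp; omega)
    obtain rfl : a = i := h0
    exact ⟨isPermList_cons_succ_cons_iff.mpr hσ,
      (avoidsPat_1243_cons_succ_cons_iff hσ).mpr h1243,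
      (avoidsPat_1324_cons_succ_cons_iff hσ).mpr h1324, rfl, rfl⟩
  · rintro π ⟨hπ, -, -, h0, h1⟩
    obtain ⟨c, r, rfl⟩ := hπ.exists_eq_cons_cons_cons hn h0 h1
    have hσ := isPermList_cons_succ_cons_iff.mp hπ
    have hi : i < k + 1 := Nat.lt_succ_of_le (hσ.le_of_mem (by simp))
    have hc : c < k + 1 := Nat.lt_succ_of_le (hσ.le_of_mem (by simp))
    exact ⟨descList_cons_max_cons_of_lt hi hc, descList_cons_max_cons_of_gt hi hc⟩

/-- For `n ≥ 3` and `1 ≤ i ≤ n-1`, deleting the second letter `n` is a bijection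
from `{1243,1324}`-avoiders of `[n]` starting `i, n` onto `{1243,1324}`-avoiders
of `[n-1]` with first letter `i`; it preserves `desc` when the image's second
letter is below `i` and lowers it by one when above `i`. -/
theorem stmt14 (n i : ℕ) (hn : 3 ≤ n) (hi1 : 1 ≤ i) (hi : i ≤ n - 1) :
    Set.BijOn (fun π : List ℕ => π.eraseIdx 1)
      {π : List ℕ | IsPermList n π ∧ AvoidsPat π [1,2,4,3] ∧ AvoidsPat π [1,3,2,4] ∧
        π[0]! = i ∧ π[1]! = n}
      {σ : List ℕ | IsPermList (n - 1) σ ∧ AvoidsPat σ [1,2,4,3] ∧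
        AvoidsPat σ [1,3,2,4] ∧ σ[0]! = i} ∧
    ∀ π ∈ {π : List ℕ | IsPermList n π ∧ AvoidsPat π [1,2,4,3] ∧ AvoidsPat π [1,3,2,4] ∧
        π[0]! = i ∧ π[1]! = n},
      ((π.eraseIdx 1)[1]! < i → descList π = descList (π.eraseIdx 1)) ∧
      (i < (π.eraseIdx 1)[1]! → descList π = descList (π.eraseIdx 1) + 1) :=
  stmt14_general n i hn
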